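/- arXiv:2109.00650 — 3 statements merged into one kernel-verified Lean document; each statement's English description precedes it below -/
import Mathlib

section
/- Deterministic core of Theorem 1 (convergence of Dash). Assume η·L ≤ 1 and 0 < η·μ ≤ 1, and set γ = 1/(1 − η·μ/2) (so γ > 1). Let G, a₀, b₁, δ, m > 0 and let ρ̂ ≥ (4G²/μ)·(1/(δ·a₀·m) + b₁). Let w₁, …, w_{T+1} ∈ E be generated by w_{t+1} = w_t − η·((1 − b_t)·g_tᵃ + b_t·g_tᵇ) for t = 1, …, T, where for every t: b_t ∈ [0, 1] with b_t ≤ b₁·γ^{−(t−1)}, the vectors g_tᵃ, g_tᵇ ∈ E satisfy ‖g_tᵃ − ∇F(w_t)‖² ≤ 4G²/(δ·a₀·m·γ^{t−1}) and ‖g_tᵇ‖ ≤ G, and ‖∇F(w_t)‖ ≤ G. If F(w₁) ≤ ρ̂, then F(w_{T+1}) ≤ ρ̂·γ^{−T}. -/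
/-!
The descent lemma for an `L`-smooth `F` shows that a step `w - η • d` with `η * L ≤ 1` decreases
`F` by `η / 2 * ‖∇F w‖ ^ 2` up to the error `η / 2 * ‖d - ∇F w‖ ^ 2`; the PL inequality turns the
decrease into the contraction factor `1 - η * μ`. The Dash direction mixes an estimate whose
squared error decays like `γ⁻¹ ^ (t - 1)` with a bounded term whose weight `b t` decays at the same
rate, and `ρhat` is chosen so that the total error is at most `(η * μ / 2) * ρhat * γ⁻¹ ^ (t - 1)`.
Since `1 - η * μ + η * μ / 2 = γ⁻¹`, the bound `ρhat * γ⁻¹ ^ t` propagates by induction.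
-/

open Gradient
open scoped RealInnerProductSpace

section Smooth

variable {E : Type*} [NormedAddCommGroup E] [InnerProductSpace ℝ E] [CompleteSpace E]
  {F : E → ℝ} {L : ℝ}

theorem HasGradientAt.hasDerivAt_comp_add_smul {x v : E} {t : ℝ} {g : E}
    (hF : HasGradientAt F g (x + t • v)) :
    HasDerivAt (fun s : ℝ => F (x + s • v)) ⟪g, v⟫ t := by
  have hline : HasDerivAt (fun s : ℝ => x + s • v) v t := by
    simpa using ((hasDerivAt_id t).smul_const v).const_add x
  simpa [InnerProductSpace.toDual_apply_apply, Function.comp_def] using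
    hF.hasFDerivAt.comp_hasDerivAt t hline

theorem le_add_inner_gradient_add_sq_norm_of_lipschitz_gradient (hdiff : Differentiable ℝ F)
    (hlip : ∀ a c : E, ‖∇ F a - ∇ F c‖ ≤ L * ‖a - c‖) (x v : E) :
    F (x + v) ≤ F x + ⟪∇ F x, v⟫ + L / 2 * ‖v‖ ^ 2 := by
  set φ : ℝ → ℝ := fun t => F (x + t • v) - t * ⟪∇ F x, v⟫ - L / 2 * ‖v‖ ^ 2 * t ^ 2 with hφdef
  have hφ : ∀ t : ℝ, HasDerivAt φ
      (⟪∇ F (x + t • v) - ∇ F x, v⟫ - L * ‖v‖ ^ 2 * t) t := by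
    intro t
    refine ((((hdiff _).hasGradientAt.hasDerivAt_comp_add_smul).sub
      (hasDerivAt_mul_const ⟪∇ F x, v⟫)).sub
      ((hasDerivAt_pow 2 t).const_mul (L / 2 * ‖v‖ ^ 2))).congr_deriv ?_
    rw [inner_sub_left]
    push_cast
    ring
  have hφ_antitone : AntitoneOn φ (Set.Ici 0) := by
    refine antitoneOn_of_deriv_nonpos (convex_Ici 0)
      (fun t _ => (hφ t).continuousAt.continuousWithinAt)
      (fun t _ => (hφ t).differentiableAt.differentiableWithinAt) fun t ht => ?_
    rw [interior_Ici] at ht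
    have hgrad_near : ‖∇ F (x + t • v) - ∇ F x‖ ≤ L * (t * ‖v‖) := by
      simpa [norm_smul, abs_of_pos (Set.mem_Ioi.mp ht)] using hlip (x + t • v) x
    rw [(hφ t).deriv]
    nlinarith [real_inner_le_norm (∇ F (x + t • v) - ∇ F x) v,
      mul_le_mul_of_nonneg_right hgrad_near (norm_nonneg v)]
  have h01 := hφ_antitone Set.self_mem_Ici (Set.mem_Ici.mpr zero_le_one) zero_le_one
  simp only [hφdef, zero_smul, add_zero, one_smul, zero_mul, ne_eq, OfNat.ofNat_ne_zero,
    not_false_eq_true, zero_pow, mul_zero, sub_zero, one_pow, mul_one, one_mul] at h01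
  linarith

theorem le_of_inexact_gradient_step (hdiff : Differentiable ℝ F)
    (hlip : ∀ a c : E, ‖∇ F a - ∇ F c‖ ≤ L * ‖a - c‖) {η : ℝ} (hη : 0 ≤ η) (hηL : η * L ≤ 1)
    (x d : E) :
    F (x - η • d) ≤ F x - η / 2 * ‖∇ F x‖ ^ 2 + η / 2 * ‖d - ∇ F x‖ ^ 2 := by
  have hdesc := le_add_inner_gradient_add_sq_norm_of_lipschitz_gradient hdiff hlip x (-(η • d))
  rw [← sub_eq_add_neg, inner_neg_right, real_inner_smul_right, norm_neg, norm_smul, mul_pow,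
    Real.norm_eq_abs, sq_abs] at hdesc
  have hquad : L / 2 * (η ^ 2 * ‖d‖ ^ 2) ≤ η / 2 * ‖d‖ ^ 2 := by
    have : L * η ^ 2 ≤ η := by nlinarith
    nlinarith [sq_nonneg ‖d‖]
  have hexpand : ‖d - ∇ F x‖ ^ 2 = ‖d‖ ^ 2 - 2 * ⟪∇ F x, d⟫ + ‖∇ F x‖ ^ 2 := by
    rw [norm_sub_sq_real, real_inner_comm]
  nlinarith

theorem le_of_inexact_gradient_step_of_pl (hdiff : Differentiable ℝ F)
    (hlip : ∀ a c : E, ‖∇ F a - ∇ F c‖ ≤ L * ‖a - c‖) {η μ : ℝ} (hη : 0 ≤ η) (hηL : η * L ≤ 1)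
    {x : E} (hPL : 2 * μ * F x ≤ ‖∇ F x‖ ^ 2) (d : E) :
    F (x - η • d) ≤ (1 - η * μ) * F x + η / 2 * ‖d - ∇ F x‖ ^ 2 := by
  nlinarith [le_of_inexact_gradient_step hdiff hlip hη hηL x d]

end Smooth

section Mixing

variable {E : Type*} [NormedAddCommGroup E] [NormedSpace ℝ E]

theorem sq_norm_smul_add_smul_le (u v : E) {b : ℝ} (hb0 : 0 ≤ b) (hb1 : b ≤ 1) :
    ‖(1 - b) • u + b • v‖ ^ 2 ≤ (1 - b) * ‖u‖ ^ 2 + b * ‖v‖ ^ 2 :=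
  ((convexOn_univ_norm (E := E)).pow (fun _ _ => norm_nonneg _) 2).2 trivial trivial
    (sub_nonneg.mpr hb1) hb0 (sub_add_cancel 1 b)

theorem sq_norm_smul_add_smul_sub_le {a c g : E} {b G : ℝ} (hb0 : 0 ≤ b) (hb1 : b ≤ 1)
    (hc : ‖c‖ ≤ G) (hg : ‖g‖ ≤ G) :
    ‖(1 - b) • a + b • c - g‖ ^ 2 ≤ ‖a - g‖ ^ 2 + 4 * G ^ 2 * b := by
  have hsplit : (1 - b) • a + b • c - g = (1 - b) • (a - g) + b • (c - g) := by module
  have hcg : ‖c - g‖ ≤ 2 * G := (norm_sub_le c g).trans (by linarith)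
  have hcg_sq : ‖c - g‖ ^ 2 ≤ 4 * G ^ 2 := by nlinarith [norm_nonneg (c - g)]
  rw [hsplit]
  nlinarith [sq_norm_smul_add_smul_le (a - g) (c - g) hb0 hb1, mul_nonneg hb0 (sq_nonneg ‖a - g‖)]

end Mixing

theorem le_mul_pow_of_le_mul_add_mul_pow {r : ℕ → ℝ} {a c q ρ : ℝ} (ha : 0 ≤ a)
    (hacq : a + c = q) (h0 : r 0 ≤ ρ) {n : ℕ}
    (hstep : ∀ s < n, r (s + 1) ≤ a * r s + c * ρ * q ^ s) :
    r n ≤ ρ * q ^ n := by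
  induction n with
  | zero => simpa using h0
  | succ n ih =>
    have hprev := ih fun s hs => hstep s (Nat.lt_succ_of_lt hs)
    calc r (n + 1) ≤ a * r n + c * ρ * q ^ n := hstep n n.lt_succ_self
      _ ≤ a * (ρ * q ^ n) + c * ρ * q ^ n := by gcongr
      _ = ρ * q ^ (n + 1) := by rw [← hacq]; ring

theorem dash_convergence_general
    {E : Type*} [NormedAddCommGroup E] [InnerProductSpace ℝ E] [CompleteSpace E]
    (F : E → ℝ) (L μ : ℝ) (hμ : 0 < μ)
    (hdiff : Differentiable ℝ F)
    (hlip : ∀ w u : E, ‖gradient F w - gradient F u‖ ≤ L * ‖w - u‖)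
    (hPL : ∀ w : E, 2 * μ * F w ≤ ‖gradient F w‖ ^ 2)
    (η γ G a₀ b₁ δ m ρhat : ℝ)
    (hηL : η * L ≤ 1) (hημ0 : 0 < η * μ) (hημ1 : η * μ ≤ 1)
    (hγ : γ = 1 / (1 - η * μ / 2))
    (hρhat : 4 * G ^ 2 / μ * (1 / (δ * a₀ * m) + b₁) ≤ ρhat)
    (T : ℕ) (w ga gb : ℕ → E) (b : ℕ → ℝ)
    (hupd : ∀ t, 1 ≤ t → t ≤ T →
      w (t + 1) = w t - η • ((1 - b t) • ga t + b t • gb t))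
    (hb01 : ∀ t, 1 ≤ t → t ≤ T → b t ∈ Set.Icc (0 : ℝ) 1)
    (hble : ∀ t, 1 ≤ t → t ≤ T → b t ≤ b₁ * (γ ^ (t - 1))⁻¹)
    (hga : ∀ t, 1 ≤ t → t ≤ T →
      ‖ga t - gradient F (w t)‖ ^ 2 ≤ 4 * G ^ 2 / (δ * a₀ * m * γ ^ (t - 1)))
    (hgb : ∀ t, 1 ≤ t → t ≤ T → ‖gb t‖ ≤ G)
    (hgrad : ∀ t, 1 ≤ t → t ≤ T → ‖gradient F (w t)‖ ≤ G)
    (hinit : F (w 1) ≤ ρhat) :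
    F (w (T + 1)) ≤ ρhat * (γ ^ T)⁻¹ := by
  have hη : 0 < η := pos_of_mul_pos_left hημ0 hμ.le
  have hγ_inv_pow : ∀ n : ℕ, (γ ^ n)⁻¹ = (1 - η * μ / 2) ^ n := fun n => by
    rw [hγ, one_div, inv_pow, inv_inv]
  have hbudget : η / 2 * (4 * G ^ 2 / (δ * a₀ * m)) + 2 * η * G ^ 2 * b₁ ≤ η * μ / 2 * ρhat :=
    calc _ = η * μ / 2 * (4 * G ^ 2 / μ * (1 / (δ * a₀ * m) + b₁)) := by field_simp; ring
      _ ≤ η * μ / 2 * ρhat := by gcongr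
  rw [hγ_inv_pow]
  refine le_mul_pow_of_le_mul_add_mul_pow (r := fun s => F (w (s + 1))) (a := 1 - η * μ)
    (c := η * μ / 2) (by linarith) (by ring) hinit fun s hs => ?_
  have ht : 1 ≤ s + 1 ∧ s + 1 ≤ T := ⟨by omega, hs⟩
  obtain ⟨hb0, hb1⟩ := hb01 (s + 1) ht.1 ht.2
  have hvar : ‖ga (s + 1) - ∇ F (w (s + 1))‖ ^ 2
      ≤ 4 * G ^ 2 / (δ * a₀ * m) * (1 - η * μ / 2) ^ s := by
    have := hga (s + 1) ht.1 ht.2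
    rwa [Nat.add_sub_cancel, ← div_div, div_eq_mul_inv _ (γ ^ s), hγ_inv_pow] at this
  have hbias : b (s + 1) ≤ b₁ * (1 - η * μ / 2) ^ s := by
    simpa [hγ_inv_pow] using hble (s + 1) ht.1 ht.2
  calc F (w (s + 1 + 1))
      ≤ (1 - η * μ) * F (w (s + 1))
          + η / 2 * (‖ga (s + 1) - ∇ F (w (s + 1))‖ ^ 2 + 4 * G ^ 2 * b (s + 1)) := by
        rw [hupd (s + 1) ht.1 ht.2]
        refine (le_of_inexact_gradient_step_of_pl hdiff hlip hη.le hηL (hPL _) _).trans ?_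
        gcongr
        exact sq_norm_smul_add_smul_sub_le hb0 hb1 (hgb _ ht.1 ht.2) (hgrad _ ht.1 ht.2)
    _ ≤ (1 - η * μ) * F (w (s + 1)) + η / 2 * (4 * G ^ 2 / (δ * a₀ * m) * (1 - η * μ / 2) ^ s
          + 4 * G ^ 2 * (b₁ * (1 - η * μ / 2) ^ s)) := by gcongr
    _ ≤ (1 - η * μ) * F (w (s + 1)) + η * μ / 2 * ρhat * (1 - η * μ / 2) ^ s := by
        linarith [mul_le_mul_of_nonneg_right hbudget (pow_nonneg (by linarith : 0 ≤ 1 - η * μ / 2) s)]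

/-- Deterministic core of Theorem 1 (convergence of Dash). -/
theorem dash_convergence
    {E : Type*} [NormedAddCommGroup E] [InnerProductSpace ℝ E] [CompleteSpace E]
    (F : E → ℝ) (L μ : ℝ) (hL : 0 < L) (hμ : 0 < μ)
    (hdiff : Differentiable ℝ F)
    (hlip : ∀ w u : E, ‖gradient F w - gradient F u‖ ≤ L * ‖w - u‖)
    (hFnonneg : ∀ w : E, 0 ≤ F w)
    (hPL : ∀ w : E, 2 * μ * F w ≤ ‖gradient F w‖ ^ 2)
    (η γ G a₀ b₁ δ m ρhat : ℝ)
    (hηL : η * L ≤ 1) (hημ0 : 0 < η * μ) (hημ1 : η * μ ≤ 1)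
    (hγ : γ = 1 / (1 - η * μ / 2))
    (hG : 0 < G) (ha₀ : 0 < a₀) (hb₁ : 0 < b₁) (hδ : 0 < δ) (hm : 0 < m)
    (hρhat : 4 * G ^ 2 / μ * (1 / (δ * a₀ * m) + b₁) ≤ ρhat)
    (T : ℕ) (w ga gb : ℕ → E) (b : ℕ → ℝ)
    (hupd : ∀ t, 1 ≤ t → t ≤ T →
      w (t + 1) = w t - η • ((1 - b t) • ga t + b t • gb t))
    (hb01 : ∀ t, 1 ≤ t → t ≤ T → b t ∈ Set.Icc (0 : ℝ) 1)
    (hble : ∀ t, 1 ≤ t → t ≤ T → b t ≤ b₁ * (γ ^ (t - 1))⁻¹)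
    (hga : ∀ t, 1 ≤ t → t ≤ T →
      ‖ga t - gradient F (w t)‖ ^ 2 ≤ 4 * G ^ 2 / (δ * a₀ * m * γ ^ (t - 1)))
    (hgb : ∀ t, 1 ≤ t → t ≤ T → ‖gb t‖ ≤ G)
    (hgrad : ∀ t, 1 ≤ t → t ≤ T → ‖gradient F (w t)‖ ≤ G)
    (hinit : F (w 1) ≤ ρhat) :
    F (w (T + 1)) ≤ ρhat * (γ ^ T)⁻¹ :=
  dash_convergence_general F L μ hμ hdiff hlip hPL η γ G a₀ b₁ δ m ρhat hηL hημ0 hημ1 hγ hρhat T w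
    ga gb b hupd hb01 hble hga hgb hgrad hinit
end

section
/- Deterministic core of Lemma 1 (warm-up stage recursion). Assume η₀·L ≤ 1 and 0 < η₀·μ ≤ 1. Let G, δ, m₀ > 0 and let u₀, u₁, …, u_T ∈ E be generated by u_{t+1} = u_t − η₀·g̃_t, where for every t the vector g̃_t ∈ E satisfies ‖g̃_t − ∇F(u_t)‖² ≤ 4G²/(δ·m₀). Then F(u_T) ≤ (1 − η₀·μ)^T · F(u₀) + 2G²/(δ·m₀·μ). -/
/-!
An `L`-Lipschitz gradient gives the descent lemma
`F (x + v) ≤ F x + ⟪∇F x, v⟫ + L/2 ‖v‖²`, so for `η L ≤ 1` an inexact gradient step satisfies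
`F (w - η g) ≤ F w - η/2 ‖∇F w‖² + η/2 ‖g - ∇F w‖²`. The Polyak–Łojasiewicz inequality turns
this into the contraction `F (u (t+1)) ≤ (1 - ημ) F (u t) + ημ · B` with `B = 2G²/(δ m₀ μ)`,
and unrolling the recursion gives the bound.
-/

open scoped NNReal RealInnerProductSpace

section GradientDescent

variable {E : Type*} [NormedAddCommGroup E] [InnerProductSpace ℝ E] [CompleteSpace E]
  {F : E → ℝ} {K : ℝ≥0}

theorem le_add_inner_gradient_add_of_lipschitzWith_gradient (hF : Differentiable ℝ F)
    (hK : LipschitzWith K (gradient F)) (x v : E) :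
    F (x + v) ≤ F x + ⟪gradient F x, v⟫ + K / 2 * ‖v‖ ^ 2 := by
  set φ : ℝ → ℝ := fun t ↦ F (x + t • v) - t * ⟪gradient F x, v⟫ - K / 2 * t ^ 2 * ‖v‖ ^ 2
  have hφ' : ∀ t, HasDerivAt φ
      (⟪gradient F (x + t • v) - gradient F x, v⟫ - K * t * ‖v‖ ^ 2) t := by
    intro t
    have hline : HasDerivAt (fun t : ℝ ↦ x + t • v) v t := by
      simpa using ((hasDerivAt_id t).smul_const v).const_add x
    have hFline := (hF (x + t • v)).hasFDerivAt.comp_hasDerivAt t hline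
    rw [← inner_gradient_left] at hFline
    refine ((hFline.sub ((hasDerivAt_id t).mul_const ⟪gradient F x, v⟫)).sub
      (((hasDerivAt_pow 2 t).const_mul (K / 2 : ℝ)).mul_const (‖v‖ ^ 2))).congr_deriv ?_
    rw [inner_sub_left]
    push_cast
    ring
  have hanti : AntitoneOn φ (Set.Ici 0) := by
    refine antitoneOn_of_hasDerivWithinAt_nonpos (convex_Ici 0)
      (fun t _ ↦ (hφ' t).continuousAt.continuousWithinAt) (fun t _ ↦ (hφ' t).hasDerivWithinAt)
      fun t ht ↦ ?_
    rw [interior_Ici, Set.mem_Ioi] at ht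
    rw [sub_nonpos]
    calc ⟪gradient F (x + t • v) - gradient F x, v⟫
        ≤ ‖gradient F (x + t • v) - gradient F x‖ * ‖v‖ := real_inner_le_norm _ _
      _ ≤ K * ‖t • v‖ * ‖v‖ := by
          gcongr
          simpa [dist_eq_norm] using hK.dist_le_mul (x + t • v) x
      _ = K * t * ‖v‖ ^ 2 := by rw [norm_smul, Real.norm_of_nonneg ht.le]; ring
  have hφ01 := hanti Set.self_mem_Ici (Set.mem_Ici.2 zero_le_one) zero_le_one
  simp only [φ, zero_smul, one_smul, add_zero] at hφ01
  linarith

theorem apply_sub_smul_le_of_lipschitzWith_gradient (hF : Differentiable ℝ F)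
    (hK : LipschitzWith K (gradient F)) {η : ℝ} (hη : 0 ≤ η) (hηK : η * K ≤ 1) (w g : E) :
    F (w - η • g) ≤ F w - η / 2 * ‖gradient F w‖ ^ 2 + η / 2 * ‖g - gradient F w‖ ^ 2 := by
  have hdescent := le_add_inner_gradient_add_of_lipschitzWith_gradient hF hK w (-(η • g))
  rw [← sub_eq_add_neg, inner_neg_right, real_inner_smul_right, norm_neg, norm_smul,
    Real.norm_of_nonneg hη] at hdescent
  have hquad : K / 2 * (η * ‖g‖) ^ 2 ≤ η / 2 * ‖g‖ ^ 2 := by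
    have : η * K * η ≤ η := by nlinarith
    calc K / 2 * (η * ‖g‖) ^ 2 = η * K * η / 2 * ‖g‖ ^ 2 := by ring
      _ ≤ η / 2 * ‖g‖ ^ 2 := by gcongr
  have hsq := norm_sub_sq_real g (gradient F w)
  rw [real_inner_comm] at hsq
  have hgap : η / 2 * ‖g - gradient F w‖ ^ 2
      = η / 2 * ‖g‖ ^ 2 - η * ⟪gradient F w, g⟫ + η / 2 * ‖gradient F w‖ ^ 2 := by
    rw [hsq]; ring
  linarith

end GradientDescent

theorem le_pow_mul_add_of_le_mul_add {R : Type*} [CommRing R] [PartialOrder R] [IsOrderedRing R]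
    {a : ℕ → R} {q b : R} (hq : 0 ≤ q) (hb : 0 ≤ b) :
    ∀ {T : ℕ}, (∀ t < T, a (t + 1) ≤ q * a t + (1 - q) * b) → a T ≤ q ^ T * a 0 + b
  | 0, _ => by simpa using hb
  | n + 1, h => calc
      a (n + 1) ≤ q * a n + (1 - q) * b := h n n.lt_succ_self
      _ ≤ q * (q ^ n * a 0 + b) + (1 - q) * b := by
          gcongr
          exact le_pow_mul_add_of_le_mul_add hq hb fun t ht ↦ h t (ht.trans n.lt_succ_self)
      _ = q ^ (n + 1) * a 0 + b := by ring

theorem warmup_recursion_general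
    {E : Type*} [NormedAddCommGroup E] [InnerProductSpace ℝ E] [CompleteSpace E]
    (F : E → ℝ) (L μ : ℝ) (hL : 0 < L) (hμ : 0 < μ)
    (hdiff : Differentiable ℝ F)
    (hlip : ∀ w u : E, ‖gradient F w - gradient F u‖ ≤ L * ‖w - u‖)
    (hPL : ∀ w : E, 2 * μ * F w ≤ ‖gradient F w‖ ^ 2)
    (η₀ G δ m₀ : ℝ)
    (hη₀L : η₀ * L ≤ 1) (hη₀μ0 : 0 < η₀ * μ) (hη₀μ1 : η₀ * μ ≤ 1)
    (hδ : 0 < δ) (hm₀ : 0 < m₀)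
    (T : ℕ) (u g : ℕ → E)
    (hupd : ∀ t < T, u (t + 1) = u t - η₀ • g t)
    (hg : ∀ t < T, ‖g t - gradient F (u t)‖ ^ 2 ≤ 4 * G ^ 2 / (δ * m₀)) :
    F (u T) ≤ (1 - η₀ * μ) ^ T * F (u 0) + 2 * G ^ 2 / (δ * m₀ * μ) := by
  have hη₀ : 0 < η₀ := pos_of_mul_pos_left hη₀μ0 hμ.le
  have hK : LipschitzWith ⟨L, hL.le⟩ (gradient F) :=
    LipschitzWith.of_dist_le_mul fun w u ↦ by rw [dist_eq_norm, dist_eq_norm]; exact hlip w u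
  refine le_pow_mul_add_of_le_mul_add (a := fun t ↦ F (u t)) (by linarith) (by positivity)
    fun t ht ↦ ?_
  have hPLt := mul_le_mul_of_nonneg_left (hPL (u t)) (half_pos hη₀).le
  have hgt := mul_le_mul_of_nonneg_left (hg t ht) (half_pos hη₀).le
  calc F (u (t + 1))
      ≤ F (u t) - η₀ / 2 * ‖gradient F (u t)‖ ^ 2 + η₀ / 2 * ‖g t - gradient F (u t)‖ ^ 2 := by
        rw [hupd t ht]
        exact apply_sub_smul_le_of_lipschitzWith_gradient hdiff hK hη₀.le hη₀L (u t) (g t)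
    _ ≤ (1 - η₀ * μ) * F (u t) + η₀ / 2 * (4 * G ^ 2 / (δ * m₀)) := by linarith
    _ = (1 - η₀ * μ) * F (u t) + (1 - (1 - η₀ * μ)) * (2 * G ^ 2 / (δ * m₀ * μ)) := by
        field_simp
        ring

/-- Deterministic core of Lemma 1 (warm-up stage recursion). -/
theorem warmup_recursion
    {E : Type*} [NormedAddCommGroup E] [InnerProductSpace ℝ E] [CompleteSpace E]
    (F : E → ℝ) (L μ : ℝ) (hL : 0 < L) (hμ : 0 < μ)
    (hdiff : Differentiable ℝ F)
    (hlip : ∀ w u : E, ‖gradient F w - gradient F u‖ ≤ L * ‖w - u‖)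
    (hFnonneg : ∀ w : E, 0 ≤ F w)
    (hPL : ∀ w : E, 2 * μ * F w ≤ ‖gradient F w‖ ^ 2)
    (η₀ G δ m₀ : ℝ)
    (hη₀L : η₀ * L ≤ 1) (hη₀μ0 : 0 < η₀ * μ) (hη₀μ1 : η₀ * μ ≤ 1)
    (hG : 0 < G) (hδ : 0 < δ) (hm₀ : 0 < m₀)
    (T : ℕ) (u g : ℕ → E)
    (hupd : ∀ t < T, u (t + 1) = u t - η₀ • g t)
    (hg : ∀ t < T, ‖g t - gradient F (u t)‖ ^ 2 ≤ 4 * G ^ 2 / (δ * m₀)) :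
    F (u T) ≤ (1 - η₀ * μ) ^ T * F (u 0) + 2 * G ^ 2 / (δ * m₀ * μ) :=
  warmup_recursion_general F L μ hL hμ hdiff hlip hPL η₀ G δ m₀ hη₀L hη₀μ0 hη₀μ1 hδ hm₀ T u g hupd
    hg
end

section
/- One-step contraction under the Polyak–Łojasiewicz condition. For every w, g ∈ E and every η > 0 with η·L ≤ 1, F(w − η·g) ≤ (1 − η·μ)·F(w) + (η/2)·‖∇F(w) − g‖². -/
/-!
By the descent lemma, the step `w - η • g` changes `F` by at most
`-η ⟪∇F w, g⟫ + L η² / 2 ‖g‖²`, which for `η L ≤ 1` is at most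
`η / 2 (‖∇F w - g‖² - ‖∇F w‖²)` by polarization; the PL inequality then
bounds `-η / 2 ‖∇F w‖²` by `-η μ F w`.
-/

open InnerProductSpace

section DescentLemma

variable {E : Type*} [NormedAddCommGroup E] [InnerProductSpace ℝ E] [CompleteSpace E]
  {F : E → ℝ} {L : ℝ}

theorem hasDerivAt_comp_add_smul_of_differentiableAt {x v : E} {t : ℝ}
    (hF : DifferentiableAt ℝ F (x + t • v)) :
    HasDerivAt (fun s : ℝ => F (x + s • v)) ⟪gradient F (x + t • v), v⟫_ℝ t := by
  have hline : HasDerivAt (fun s : ℝ => x + s • v) v t := by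
    simpa using ((hasDerivAt_id t).smul_const v).const_add x
  rw [inner_gradient_left]
  exact hF.hasFDerivAt.comp_hasDerivAt t hline

theorem inner_gradient_add_smul_sub_le
    (hlip : ∀ x y : E, ‖gradient F x - gradient F y‖ ≤ L * ‖x - y‖) (x v : E) {t : ℝ}
    (ht : 0 ≤ t) :
    ⟪gradient F (x + t • v) - gradient F x, v⟫_ℝ ≤ L * t * ‖v‖ ^ 2 :=
  calc ⟪gradient F (x + t • v) - gradient F x, v⟫_ℝ
      ≤ ‖gradient F (x + t • v) - gradient F x‖ * ‖v‖ := real_inner_le_norm _ _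
    _ ≤ L * ‖t • v‖ * ‖v‖ := by
        gcongr
        simpa using hlip (x + t • v) x
    _ = L * t * ‖v‖ ^ 2 := by rw [norm_smul, Real.norm_of_nonneg ht]; ring

/-- The descent lemma. -/
theorem le_add_inner_gradient_add_of_lipschitz_gradient (hF : Differentiable ℝ F)
    (hlip : ∀ x y : E, ‖gradient F x - gradient F y‖ ≤ L * ‖x - y‖) (x v : E) :
    F (x + v) ≤ F x + ⟪gradient F x, v⟫_ℝ + L / 2 * ‖v‖ ^ 2 := by
  set φ : ℝ → ℝ := fun t =>
    F (x + t • v) - t * ⟪gradient F x, v⟫_ℝ - L * t ^ 2 / 2 * ‖v‖ ^ 2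
  have hφ : ∀ t, HasDerivAt φ
      (⟪gradient F (x + t • v), v⟫_ℝ - ⟪gradient F x, v⟫_ℝ
        - L * t * ‖v‖ ^ 2) t := by
    intro t
    have hquad := (((hasDerivAt_pow 2 t).const_mul L).div_const 2).mul_const (‖v‖ ^ 2)
    have hline := hasDerivAt_comp_add_smul_of_differentiableAt (x := x) (v := v) (hF (x + t • v))
    have hlinear := (hasDerivAt_id t).mul_const ⟪gradient F x, v⟫_ℝ
    refine ((hline.sub hlinear).sub hquad).congr_deriv ?_
    ring
  have hanti : AntitoneOn φ (Set.Icc 0 1) := by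
    refine antitoneOn_of_hasDerivWithinAt_nonpos (convex_Icc 0 1)
      (fun t _ => (hφ t).continuousAt.continuousWithinAt) (fun t _ => (hφ t).hasDerivWithinAt) ?_
    intro t ht
    rw [interior_Icc] at ht
    have := inner_gradient_add_smul_sub_le hlip x v ht.1.le
    rw [inner_sub_left] at this
    linarith
  have hφ_le : φ 1 ≤ φ 0 :=
    hanti (Set.left_mem_Icc.2 zero_le_one) (Set.right_mem_Icc.2 zero_le_one) zero_le_one
  simp only [φ, one_smul, zero_smul, add_zero] at hφ_le
  linarith

end DescentLemma

theorem one_step_PL_contraction_general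
    {E : Type*} [NormedAddCommGroup E] [InnerProductSpace ℝ E] [CompleteSpace E]
    (F : E → ℝ) (L μ : ℝ)
    (hdiff : Differentiable ℝ F)
    (hlip : ∀ w u : E, ‖gradient F w - gradient F u‖ ≤ L * ‖w - u‖)
    (hPL : ∀ w : E, 2 * μ * F w ≤ ‖gradient F w‖ ^ 2)
    (w g : E) (η : ℝ) (hη : 0 < η) (hηL : η * L ≤ 1) :
    F (w - η • g) ≤ (1 - η * μ) * F w + η / 2 * ‖gradient F w - g‖ ^ 2 := by
  have hdescent := le_add_inner_gradient_add_of_lipschitz_gradient hdiff hlip w (-(η • g))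
  rw [← sub_eq_add_neg, inner_neg_right, real_inner_smul_right, norm_neg, norm_smul,
    Real.norm_of_nonneg hη.le] at hdescent
  have hstep : L / 2 * (η * ‖g‖) ^ 2 ≤ η / 2 * ‖g‖ ^ 2 := by
    have : η * L * (η * ‖g‖ ^ 2) ≤ 1 * (η * ‖g‖ ^ 2) := by gcongr
    linarith
  have hgrad : η * μ * F w ≤ η / 2 * ‖gradient F w‖ ^ 2 := by
    have := mul_le_mul_of_nonneg_left (hPL w) hη.le
    linarith
  rw [norm_sub_sq_real]
  linarith

/-- One-step contraction under the Polyak–Łojasiewicz condition. -/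
theorem one_step_PL_contraction
    {E : Type*} [NormedAddCommGroup E] [InnerProductSpace ℝ E] [CompleteSpace E]
    (F : E → ℝ) (L μ : ℝ) (hL : 0 < L) (hμ : 0 < μ)
    (hdiff : Differentiable ℝ F)
    (hlip : ∀ w u : E, ‖gradient F w - gradient F u‖ ≤ L * ‖w - u‖)
    (hFnonneg : ∀ w : E, 0 ≤ F w)
    (hPL : ∀ w : E, 2 * μ * F w ≤ ‖gradient F w‖ ^ 2)
    (w g : E) (η : ℝ) (hη : 0 < η) (hηL : η * L ≤ 1) :
    F (w - η • g) ≤ (1 - η * μ) * F w + η / 2 * ‖gradient F w - g‖ ^ 2 :=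
  one_step_PL_contraction_general F L μ hdiff hlip hPL w g η hη hηL
end
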